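/- The dimension of the kernel of the graph Laplacian L = A A^T of a finite oriented graph equals the number of connected components of the underlying undirected graph. -/

import Mathlib

open Matrix

/-!
Over `ℝ`, `xᵀ (A Aᵀ) x = ‖Aᵀ x‖²`, so `ker (A Aᵀ) = ker Aᵀ`. For the oriented incidence matrix,
`(Aᵀ x) e = x (tail e) - x (head e)`, so `ker Aᵀ` consists of the functions constant along every
edge: this is also the kernel of the Laplacian of the underlying simple graph, whose dimension is
the number of connected components.
-/

namespace OrientedGraph

variable {V E : Type*} (tail head : E → V)

def underlyingGraph : SimpleGraph V :=
  SimpleGraph.fromRel fun v w => ∃ e, tail e = v ∧ head e = w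

def incidenceMatrix (R : Type*) [Ring R] [DecidableEq V] : Matrix V E R :=
  Matrix.of fun v e => if tail e = v then 1 else if head e = v then -1 else 0

variable {tail head}

theorem transpose_incidenceMatrix_mulVec {R : Type*} [Ring R] [Fintype V] [DecidableEq V]
    (hth : ∀ e, tail e ≠ head e) (x : V → R) (e : E) :
    ((incidenceMatrix tail head R)ᵀ *ᵥ x) e = x (tail e) - x (head e) := by
  have hterm : ∀ v, incidenceMatrix tail head R v e * x v =
      (if tail e = v then x v else 0) - (if head e = v then x v else 0) := by
    intro v
    by_cases htail : tail e = v
    · have hhead : head e ≠ v := fun h => hth e (htail.trans h.symm)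
      simp [incidenceMatrix, htail, hhead]
    · by_cases hhead : head e = v <;> simp [incidenceMatrix, htail, hhead]
  simp only [mulVec, dotProduct, transpose_apply, hterm, Finset.sum_sub_distrib,
    Finset.sum_ite_eq, Finset.mem_univ, if_true]

theorem transpose_incidenceMatrix_mulVec_eq_zero_iff {R : Type*} [Ring R] [Fintype V]
    [DecidableEq V] (hth : ∀ e, tail e ≠ head e) (x : V → R) :
    (incidenceMatrix tail head R)ᵀ *ᵥ x = 0 ↔ ∀ e, x (tail e) = x (head e) := by
  simp only [funext_iff, transpose_incidenceMatrix_mulVec hth, Pi.zero_apply, sub_eq_zero]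

theorem forall_adj_underlyingGraph_iff {α : Type*} (hth : ∀ e, tail e ≠ head e) (x : V → α) :
    (∀ v w, (underlyingGraph tail head).Adj v w → x v = x w) ↔
      ∀ e, x (tail e) = x (head e) := by
  refine ⟨fun h e => h _ _ ⟨hth e, .inl ⟨e, rfl, rfl⟩⟩, ?_⟩
  rintro h v w ⟨-, ⟨e, rfl, rfl⟩ | ⟨e, rfl, rfl⟩⟩
  exacts [h e, (h e).symm]

theorem ker_incidenceMatrix_mul_transpose_eq_ker_lapMatrix [Fintype V] [Fintype E]
    [DecidableEq V] [DecidableRel (underlyingGraph tail head).Adj]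
    (hth : ∀ e, tail e ≠ head e) :
    LinearMap.ker (incidenceMatrix tail head ℝ * (incidenceMatrix tail head ℝ)ᵀ).mulVecLin =
      LinearMap.ker ((underlyingGraph tail head).lapMatrix ℝ).toLin' := by
  ext x
  rw [LinearMap.mem_ker, LinearMap.mem_ker, mulVecLin_apply, toLin'_apply,
    ← conjTranspose_eq_transpose_of_trivial, self_mul_conjTranspose_mulVec_eq_zero,
    conjTranspose_eq_transpose_of_trivial, transpose_incidenceMatrix_mulVec_eq_zero_iff hth,
    SimpleGraph.lapMatrix_mulVec_eq_zero_iff_forall_adj, forall_adj_underlyingGraph_iff hth]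

end OrientedGraph

/-- The dimension of the kernel of the graph Laplacian `L = A * Aᵀ` of a
finite oriented graph equals the number of connected components of the underlying
undirected graph. -/
theorem laplacian_kernel_dim_eq_components
    {V E : Type*} [Fintype V] [Fintype E] [DecidableEq V]
    (tail head : E → V) (hth : ∀ e, tail e ≠ head e)
    (A : Matrix V E ℝ)
    (hA : ∀ v e, A v e = if tail e = v then 1 else if head e = v then -1 else 0)
    (L : Matrix V V ℝ) (hL : L = A * Aᵀ) :
    Module.finrank ℝ (LinearMap.ker L.mulVecLin) =
      Nat.card (SimpleGraph.fromRel fun v w => ∃ e, tail e = v ∧ head e = w).ConnectedComponent := by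
  classical
  obtain rfl : A = OrientedGraph.incidenceMatrix tail head ℝ := Matrix.ext hA
  change _ = Nat.card (OrientedGraph.underlyingGraph tail head).ConnectedComponent
  rw [hL, OrientedGraph.ker_incidenceMatrix_mul_transpose_eq_ker_lapMatrix hth,
    Nat.card_eq_fintype_card,
    SimpleGraph.card_connectedComponent_eq_finrank_ker_toLin'_lapMatrix]
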